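/- arXiv:2408.05762 — 8 statements merged into one kernel-verified Lean document; each statement's English description precedes it below -/
import Mathlib

section
/- Let G = (V, E) be a strongly connected digraph containing at least one cycle, let v be a vertex of G, and let k be an integer with 1 ≤ k ≤ |V|. Then k divides the period of G if and only if there is no path in the undirected graph G'_k between (v, 0) and (v, i) for any i ≠ 0. -/
variable {V : Type*}

/-- There is a path (walk) of length `n` from `u` to `v` in the digraph with
edge relation `E`: a sequence `u = f 0, f 1, …, f n = v` of vertices with
`(f i, f (i+1))` an edge for all `i < n`. Vertices and edges may repeat. -/
def IsPathOfLength (E : V → V → Prop) (u v : V) (n : ℕ) : Prop :=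
  ∃ f : ℕ → V, f 0 = u ∧ f n = v ∧ ∀ i < n, E (f i) (f (i + 1))

/-- There is a `(u,v)`-path (of some length). -/
def HasPath (E : V → V → Prop) (u v : V) : Prop :=
  ∃ n, IsPathOfLength E u v n

/-- A digraph is strongly connected if there is a path between every pair of vertices. -/
def StronglyConnected (E : V → V → Prop) : Prop :=
  ∀ u v, HasPath E u v

/-- The set of lengths of cycles (paths of positive length from a vertex to itself). -/
def cycleLengths (E : V → V → Prop) : Set ℕ :=
  {n | 0 < n ∧ ∃ v, IsPathOfLength E v v n}

/-- A digraph is acyclic if it has no cycle. -/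
def Acyclic (E : V → V → Prop) : Prop :=
  ∀ (v : V) (n : ℕ), 0 < n → ¬ IsPathOfLength E v v n

/-- `p` is the greatest common divisor of the set `S` of natural numbers:
`p` divides every element of `S`, and every common divisor of `S` divides `p`. -/
def IsSetGcd (S : Set ℕ) (p : ℕ) : Prop :=
  (∀ n ∈ S, p ∣ n) ∧ ∀ q : ℕ, (∀ n ∈ S, q ∣ n) → q ∣ p

/-- `u` and `v` are in the same strongly connected component. -/
def SameSCC (E : V → V → Prop) (u v : V) : Prop :=
  HasPath E u v ∧ HasPath E v u

/-- The set of lengths of cycles contained in the strongly connected component of `c`. -/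
def compCycleLengths (E : V → V → Prop) (c : V) : Set ℕ :=
  {n | 0 < n ∧ ∃ v, SameSCC E v c ∧ IsPathOfLength E v v n}

/-- `P` is the period of the digraph `E`: the least common multiple of the periods
(gcds of cycle lengths) of the strongly connected components containing at least one
cycle. Characterised by divisibility: every such component period divides `P`, and `P`
divides every common multiple of the component periods. -/
def IsDigraphPeriod (E : V → V → Prop) (P : ℕ) : Prop :=
  (∀ (c : V) (p : ℕ), (compCycleLengths E c).Nonempty →
      IsSetGcd (compCycleLengths E c) p → p ∣ P) ∧
  ∀ Q : ℕ, (∀ (c : V) (p : ℕ), (compCycleLengths E c).Nonempty →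
      IsSetGcd (compCycleLengths E c) p → p ∣ Q) → P ∣ Q

/-- There is a path of length `n` from `u` to `v` passing through the vertex `c`. -/
def IsPathThruOfLength (E : V → V → Prop) (u v c : V) (n : ℕ) : Prop :=
  ∃ f : ℕ → V, f 0 = u ∧ f n = v ∧ (∀ i < n, E (f i) (f (i + 1))) ∧ ∃ m ≤ n, f m = c

/-- Adjacency in the undirected graph `G'_k`: vertices `(u, i)` and `(v, j)` of
`V × ZMod k` are adjacent iff `(u,v) ∈ E` and `j = i + 1 (mod k)` (in either direction). -/
def GkAdj (E : V → V → Prop) (k : ℕ) (a b : V × ZMod k) : Prop :=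
  (E a.1 b.1 ∧ b.2 = a.2 + 1) ∨ (E b.1 a.1 ∧ a.2 = b.2 + 1)

/-- Two vertices of `G'_k` are joined by an (undirected) path. -/
def GkConn (E : V → V → Prop) (k : ℕ) : V × ZMod k → V × ZMod k → Prop :=
  Relation.ReflTransGen (GkAdj E k)

/- The `G'_k`-component of `(v, 0)` meets the fibre over `v` in a subgroup of `ZMod k`, namely the
one generated by the cycle lengths, i.e. by the period `p`. If `k ∣ p`, then all walks between two
fixed vertices have congruent lengths mod `k`, so `(u, i) ↦ i - (level of u)` is constant on
components and the subgroup is trivial; if `k ∤ p`, then `p ≠ 0` in `ZMod k` lies in it. -/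

theorem IsSetGcd.natCast_mem {A : Type*} [AddGroupWithOne A] {S : Set ℕ} {p : ℕ}
    (hp : IsSetGcd S p) {H : AddSubgroup A} (hS : ∀ n ∈ S, (n : A) ∈ H) : (p : A) ∈ H := by
  obtain ⟨g, hg⟩ := Int.subgroup_cyclic (AddSubgroup.closure ((Nat.cast : ℕ → ℤ) '' S))
  rw [← AddSubgroup.zmultiples_eq_closure] at hg
  have hgS : ∀ n ∈ S, g.natAbs ∣ n := fun n hn => by
    have hn : (n : ℤ) ∈ AddSubgroup.zmultiples g := hg ▸ AddSubgroup.subset_closure ⟨n, hn, rfl⟩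
    exact Int.natAbs_dvd_natAbs.2 (Int.mem_zmultiples_iff.1 hn)
  have hpg : (p : ℤ) ∈ AddSubgroup.closure ((Nat.cast : ℕ → ℤ) '' S) := by
    rw [hg, Int.mem_zmultiples_iff]
    exact Int.natAbs_dvd.1 (Int.natCast_dvd_natCast.2 (hp.2 _ hgS))
  have hle : AddSubgroup.closure ((Nat.cast : ℕ → ℤ) '' S) ≤ H.comap (Int.castAddHom A) :=
    (AddSubgroup.closure_le _).2 (by rintro _ ⟨n, hn, rfl⟩; simpa using hS n hn)
  simpa using hle hpg

section Paths

variable {E : V → V → Prop} {u w x : V}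

theorem isPathOfLength_zero : IsPathOfLength E u w 0 ↔ u = w :=
  ⟨fun ⟨_, h0, h1, _⟩ => h0.symm.trans h1, fun h => ⟨fun _ => u, rfl, h, by simp⟩⟩

theorem isPathOfLength_succ {n : ℕ} :
    IsPathOfLength E u w (n + 1) ↔ ∃ x, IsPathOfLength E u x n ∧ E x w := by
  constructor
  · rintro ⟨f, h0, hn, hf⟩
    exact ⟨f n, ⟨f, h0, rfl, fun i hi => hf i (by omega)⟩, hn ▸ hf n (by omega)⟩
  · rintro ⟨x, ⟨f, h0, hn, hf⟩, hxw⟩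
    refine ⟨Function.update f (n + 1) w, by simp [h0], by simp, fun i hi => ?_⟩
    rw [Function.update_of_ne (by omega)]
    rcases Nat.lt_succ_iff_lt_or_eq.1 hi with hi | rfl
    · rw [Function.update_of_ne (by omega)]
      exact hf i hi
    · simpa [hn] using hxw

theorem IsPathOfLength.single (h : E u w) : IsPathOfLength E u w 1 :=
  isPathOfLength_succ.2 ⟨u, isPathOfLength_zero.2 rfl, h⟩

theorem IsPathOfLength.append {a b : ℕ} (h₁ : IsPathOfLength E u w a)
    (h₂ : IsPathOfLength E w x b) : IsPathOfLength E u x (a + b) := by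
  induction b generalizing x with
  | zero => rwa [isPathOfLength_zero.1 h₂] at h₁
  | succ b ih =>
    obtain ⟨y, hy, hyx⟩ := isPathOfLength_succ.1 h₂
    exact isPathOfLength_succ.2 ⟨y, ih hy, hyx⟩

theorem dvd_of_isPathOfLength_self {k n : ℕ} (hk : ∀ m ∈ cycleLengths E, k ∣ m)
    (h : IsPathOfLength E u u n) : k ∣ n := by
  rcases n.eq_zero_or_pos with rfl | hn
  · exact dvd_zero k
  · exact hk n ⟨hn, u, h⟩

/-- Closing both walks with a common return walk turns them into cycles. -/
theorem natCast_eq_of_isPathOfLength {k m n : ℕ} (hsc : StronglyConnected E)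
    (hk : ∀ m ∈ cycleLengths E, k ∣ m) (hm : IsPathOfLength E u w m)
    (hn : IsPathOfLength E u w n) : (m : ZMod k) = n := by
  obtain ⟨t, ht⟩ := hsc w u
  have hmt := (ZMod.natCast_eq_zero_iff _ _).2 (dvd_of_isPathOfLength_self hk (hm.append ht))
  have hnt := (ZMod.natCast_eq_zero_iff _ _).2 (dvd_of_isPathOfLength_self hk (hn.append ht))
  push_cast at hmt hnt
  exact add_right_cancel (hmt.trans hnt.symm)

end Paths

section Gk

variable {E : V → V → Prop} {k : ℕ}

theorem GkConn.symm {a b : V × ZMod k} (h : GkConn E k a b) : GkConn E k b a := by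
  induction h with
  | refl => exact .refl
  | tail _ hadj ih => exact Relation.ReflTransGen.head (Or.symm hadj) ih

theorem GkConn.add_snd {a b : V × ZMod k} (h : GkConn E k a b) (c : ZMod k) :
    GkConn E k (a.1, a.2 + c) (b.1, b.2 + c) := by
  induction h with
  | refl => exact .refl
  | tail _ hadj ih =>
    refine ih.tail ?_
    rcases hadj with ⟨he, hj⟩ | ⟨he, hj⟩
    · exact Or.inl ⟨he, by simp [hj, add_right_comm]⟩
    · exact Or.inr ⟨he, by simp [hj, add_right_comm]⟩

theorem IsPathOfLength.gkConn {u w : V} {n : ℕ} (h : IsPathOfLength E u w n) (i : ZMod k) :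
    GkConn E k (u, i) (w, i + n) := by
  induction n generalizing w with
  | zero => simp [isPathOfLength_zero.1 h, GkConn, Relation.ReflTransGen.refl]
  | succ n ih =>
    obtain ⟨x, hx, hxw⟩ := isPathOfLength_succ.1 h
    exact (ih hx).tail (Or.inl ⟨hxw, by push_cast; ring⟩)

def gkReturnShifts (E : V → V → Prop) (k : ℕ) (v : V) : AddSubgroup (ZMod k) where
  carrier := {i | GkConn E k (v, 0) (v, i)}
  zero_mem' := .refl
  add_mem' {i j} hi hj := hj.trans (by simpa using hi.add_snd j : GkConn E k (v, j) (v, i + j))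
  neg_mem' {i} hi := (by simpa using hi.symm.add_snd (-i) : GkConn E k (v, 0) (v, -i))

theorem mem_gkReturnShifts {v : V} {i : ZMod k} :
    i ∈ gkReturnShifts E k v ↔ GkConn E k (v, 0) (v, i) := Iff.rfl

theorem natCast_mem_gkReturnShifts_of_mem_cycleLengths {v : V} {n : ℕ}
    (hsc : StronglyConnected E) (hn : n ∈ cycleLengths E) :
    (n : ZMod k) ∈ gkReturnShifts E k v := by
  obtain ⟨-, w, hw⟩ := hn
  obtain ⟨s, hs⟩ := hsc v w
  obtain ⟨t, ht⟩ := hsc w v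
  have hround : ((s + t : ℕ) : ZMod k) ∈ gkReturnShifts E k v :=
    mem_gkReturnShifts.2 (by simpa using (hs.append ht).gkConn (k := k) 0)
  have hcycle : ((s + n + t : ℕ) : ZMod k) ∈ gkReturnShifts E k v :=
    mem_gkReturnShifts.2 (by simpa using ((hs.append hw).append ht).gkConn (k := k) 0)
  simpa [add_right_comm] using sub_mem hcycle hround

theorem natCast_mem_gkReturnShifts_of_isSetGcd {v : V} {p : ℕ} (hsc : StronglyConnected E)
    (hp : IsSetGcd (cycleLengths E) p) : (p : ZMod k) ∈ gkReturnShifts E k v :=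
  hp.natCast_mem fun _ hn => natCast_mem_gkReturnShifts_of_mem_cycleLengths hsc hn

/-- If `k` divides every cycle length, then `u ↦` (length of any walk `v → u`) mod `k` is a
well-defined level, and `i - level u` is invariant along edges of `G'_k`. -/
theorem GkConn.snd_eq_of_dvd_cycleLengths {v : V} {i j : ZMod k} (hsc : StronglyConnected E)
    (hk : ∀ n ∈ cycleLengths E, k ∣ n) (h : GkConn E k (v, i) (v, j)) : i = j := by
  choose ℓ hℓ using fun u => hsc v u
  have hstep : ∀ {a b : V}, E a b → ((ℓ b : ℕ) : ZMod k) = ℓ a + 1 := fun hab => by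
    simpa using natCast_eq_of_isPathOfLength hsc hk (hℓ _) ((hℓ _).append (.single hab))
  suffices ∀ b, GkConn E k (v, i) b → i - ℓ v = b.2 - ℓ b.1 by
    simpa using this _ h
  intro b hb
  induction hb with
  | refl => rfl
  | tail _ hadj ih =>
    rcases hadj with ⟨he, hj⟩ | ⟨he, hj⟩ <;> rw [ih, hj, hstep he] <;> ring

end Gk

theorem period_dvd_iff_no_Gk_path_general (E : V → V → Prop)
    (hsc : StronglyConnected E)
    (p : ℕ) (hp : IsSetGcd (cycleLengths E) p)
    (v : V) (k : ℕ) :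
    k ∣ p ↔ ∀ i : ZMod k, i ≠ 0 → ¬ GkConn E k (v, 0) (v, i) := by
  constructor
  · intro hkp i hi hconn
    exact hi (hconn.snd_eq_of_dvd_cycleLengths hsc fun n hn => hkp.trans (hp.1 n hn)).symm
  · intro hno
    by_contra hkp
    exact hno p (mt (ZMod.natCast_eq_zero_iff p k).1 hkp)
      (natCast_mem_gkReturnShifts_of_isSetGcd hsc hp)

/-- For a strongly connected digraph `G` containing at least one cycle,
a vertex `v`, and `1 ≤ k ≤ |V|`, `k` divides the period of `G` iff there is no path in
the undirected graph `G'_k` between `(v, 0)` and `(v, i)` for any `i ≠ 0`. -/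
theorem period_dvd_iff_no_Gk_path [Fintype V] (E : V → V → Prop)
    (hsc : StronglyConnected E) (hcyc : (cycleLengths E).Nonempty)
    (p : ℕ) (hp : IsSetGcd (cycleLengths E) p)
    (v : V) (k : ℕ) (hk1 : 1 ≤ k) (hk2 : k ≤ Fintype.card V) :
    k ∣ p ↔ ∀ i : ZMod k, i ≠ 0 → ¬ GkConn E k (v, 0) (v, i) :=
  period_dvd_iff_no_Gk_path_general E hsc p hp v k
end

section
/- Let G = (V, E) be a digraph, let s, t, c be vertices of G, let C be the strongly connected component of c, and assume C contains at least one cycle and has period p. If there is an (s,t)-path in G of length ℓ passing through c, then there exists N such that for every integer i ≥ N there is an (s,t)-path in G of length ℓ + i·p. -/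
variable {V : Type*}

section AuxPathLemmas

lemma path_zero' (E : V → V → Prop) (v : V) : IsPathOfLength E v v 0 :=
  ⟨fun _ => v, rfl, rfl, fun i hi => absurd hi (by omega)⟩

lemma path_trans' {E : V → V → Prop} {u v w : V} {m n : ℕ}
    (h1 : IsPathOfLength E u v m) (h2 : IsPathOfLength E v w n) :
    IsPathOfLength E u w (m + n) := by
  obtain ⟨f, hf0, hfm, hf⟩ := h1
  obtain ⟨g, hg0, hgn, hg⟩ := h2
  set h : ℕ → V := fun i => if i < m then f i else g (i - m) with hh
  have hh1 : ∀ i ≤ m, h i = f i := by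
    intro i hi
    by_cases h' : i < m
    · simp [hh, h']
    · have : i = m := by omega
      simp [hh, this, hg0, hfm]
  have hh2 : ∀ j, h (m + j) = g j := by
    intro j
    have : ¬ m + j < m := by omega
    simp [hh, this]
  refine ⟨h, by rw [hh1 0 (by omega), hf0], by rw [hh2, hgn], ?_⟩
  intro i hi
  by_cases h' : i < m
  · rw [hh1 i (by omega), hh1 (i+1) (by omega)]; exact hf i h'
  · obtain ⟨j, rfl⟩ : ∃ j, i = m + j := ⟨i - m, by omega⟩
    have e : m + j + 1 = m + (j + 1) := by omega
    rw [hh2 j, e, hh2 (j+1)]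
    exact hg j (by omega)

lemma key_numeric' {L : Set ℕ} (h0 : 0 ∈ L) (hadd : ∀ a ∈ L, ∀ b ∈ L, a + b ∈ L)
    {p : ℕ} (hg : IsSetGcd {n | 0 < n ∧ n ∈ L} p) :
    ∃ N, ∀ i ≥ N, i * p ∈ L := by
  have hmul : ∀ (k : ℕ), ∀ a ∈ L, k * a ∈ L := by
    intro k a ha
    induction k with
    | zero => simpa using h0
    | succ k ih => have := hadd _ ih _ ha; rwa [show k * a + a = (k+1) * a by ring] at this
  have hdvd : ∀ n ∈ L, p ∣ n := by
    intro n hn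
    rcases Nat.eq_zero_or_pos n with h | h
    · simp [h]
    · exact hg.1 n ⟨h, hn⟩
  set D : Submodule ℤ ℤ :=
    { carrier := {z | ∃ u ∈ L, ∃ v ∈ L, z = (u:ℤ) - v}
      add_mem' := by
        rintro x y ⟨u, hu, v, hv, rfl⟩ ⟨u', hu', v', hv', rfl⟩
        exact ⟨u + u', hadd _ hu _ hu', v + v', hadd _ hv _ hv', by push_cast; ring⟩
      zero_mem' := ⟨0, h0, 0, h0, by ring⟩
      smul_mem' := by
        rintro c x ⟨u, hu, v, hv, rfl⟩
        rcases Int.eq_nat_or_neg c with ⟨m, rfl | rfl⟩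
        · exact ⟨m * u, hmul m u hu, m * v, hmul m v hv, by
            push_cast [smul_eq_mul]; ring⟩
        · exact ⟨m * v, hmul m v hv, m * u, hmul m u hu, by
            push_cast [smul_eq_mul]; ring⟩ } with hD
  haveI hpr : D.IsPrincipal := IsPrincipalIdealRing.principal (D : Ideal ℤ)
  set g : ℤ := Submodule.IsPrincipal.generator D with hgdef
  have hgen_mem : g ∈ D := Submodule.IsPrincipal.generator_mem D
  have hgdvd : ∀ x ∈ D, g ∣ x := fun x hx =>
    (Submodule.IsPrincipal.mem_iff_generator_dvd (D : Ideal ℤ)).mp hx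
  have hmemD : ∀ n ∈ L, (n : ℤ) ∈ D := fun n hn => ⟨n, hn, 0, h0, by ring⟩
  have hq1 : ∀ n ∈ L, g.natAbs ∣ n := by
    intro n hn
    have : ((g.natAbs : ℤ)) ∣ (n : ℤ) := Int.natAbs_dvd.mpr (hgdvd _ (hmemD n hn))
    exact_mod_cast this
  have hcommon : ∀ r : ℕ, (∀ n ∈ L, r ∣ n) → r ∣ g.natAbs := by
    intro r hr
    obtain ⟨u, hu, v, hv, hge⟩ := hgen_mem
    have hru : (r : ℤ) ∣ (u : ℤ) := Int.natCast_dvd_natCast.mpr (hr u hu)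
    have hrv : (r : ℤ) ∣ (v : ℤ) := Int.natCast_dvd_natCast.mpr (hr v hv)
    have : (r : ℤ) ∣ g := hge ▸ dvd_sub hru hrv
    exact Int.natCast_dvd_natCast.mp (Int.dvd_natAbs.mpr this)
  have hpq : p = g.natAbs :=
    Nat.dvd_antisymm (hcommon p hdvd) (hg.2 g.natAbs (fun n hn => hq1 n hn.2))
  have hpD : (p : ℤ) ∈ D := by
    have habs : ((g.natAbs : ℤ)) = g ∨ ((g.natAbs : ℤ)) = -g := by omega
    rw [hpq]
    rcases habs with h | h
    · rw [h]; exact hgen_mem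
    · rw [h]; exact neg_mem hgen_mem
  obtain ⟨u, hu, v, hv, heq⟩ := hpD
  have hu_eq : u = v + p := by omega
  obtain ⟨v', rfl⟩ : ∃ v', v = p * v' := hdvd v hv
  rcases Nat.eq_zero_or_pos v' with hv0 | hv0
  · refine ⟨0, fun i _ => ?_⟩
    have hpL : p ∈ L := by rwa [hu_eq, hv0, Nat.mul_zero, Nat.zero_add] at hu
    exact hmul i p hpL
  · refine ⟨v' * v', fun i hi => ?_⟩
    obtain ⟨r, qt, hr, hiq⟩ : ∃ r qt, r < v' ∧ i = qt * v' + r :=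
      ⟨i % v', i / v', Nat.mod_lt _ hv0, by
        conv_lhs => rw [← Nat.div_add_mod i v']
        ring⟩
    have hqt : v' ≤ qt := by nlinarith
    obtain ⟨j, hj⟩ := Nat.le.dest (show r ≤ qt by omega)
    have hi_eq : i = (r + j) * v' + r := by rw [hj]; exact hiq
    have hmem : j * (p * v') + r * u ∈ L := hadd _ (hmul j _ hv) _ (hmul r u hu)
    have heq2 : j * (p * v') + r * u = i * p := by rw [hu_eq, hi_eq]; ring
    rwa [heq2] at hmem

lemma gcd_loops_at' {E : V → V → Prop} {c : V} {p : ℕ}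
    (hp : IsSetGcd (compCycleLengths E c) p) :
    IsSetGcd {n | 0 < n ∧ IsPathOfLength E c c n} p := by
  constructor
  · rintro n ⟨hn0, hn⟩
    exact hp.1 n ⟨hn0, c, ⟨⟨0, path_zero' E c⟩, ⟨0, path_zero' E c⟩⟩, hn⟩
  · intro q hq
    apply hp.2 q
    rintro n ⟨hn0, v, ⟨⟨b, hbc⟩, ⟨a, hca⟩⟩, hloop⟩
    have d2 : q ∣ a + (n + b) := by
      refine hq _ ⟨by omega, path_trans' hca (path_trans' hloop hbc)⟩
    rcases Nat.eq_zero_or_pos (a + b) with hab | hab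
    · have e : a + (n + b) = n := by omega
      rwa [e] at d2
    · have d1 : q ∣ a + b := hq _ ⟨hab, path_trans' hca hbc⟩
      have := Nat.dvd_sub d2 d1
      have e : a + (n + b) - (a + b) = n := by omega
      rwa [e] at this

end AuxPathLemmas

/-- If the strongly connected component of `c` contains a cycle and has
period `p`, and there is an `(s,t)`-path of length `ℓ` through `c`, then for all large
enough `i` there is an `(s,t)`-path of length `ℓ + i·p`. -/
theorem eventually_path_of_path_through_component (E : V → V → Prop) (s t c : V)
    (hcyc : (compCycleLengths E c).Nonempty)
    (p : ℕ) (hp : IsSetGcd (compCycleLengths E c) p)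
    (l : ℕ) (hl : IsPathThruOfLength E s t c l) :
    ∃ N : ℕ, ∀ i ≥ N, IsPathOfLength E s t (l + i * p) := by
  obtain ⟨f, hf0, hfl, hfe, m, hm, hfm⟩ := hl
  have p1 : IsPathOfLength E s c m := ⟨f, hf0, hfm, fun i hi => hfe i (by omega)⟩
  have p2 : IsPathOfLength E c t (l - m) := by
    refine ⟨fun i => f (m + i), hfm, ?_, ?_⟩
    · show f (m + (l - m)) = t
      rw [show m + (l - m) = l by omega]; exact hfl
    · intro i hi
      show E (f (m + i)) (f (m + (i + 1)))
      have := hfe (m + i) (by omega)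
      rwa [show m + (i + 1) = m + i + 1 by omega]
  obtain ⟨N, hN⟩ := key_numeric' (L := {n | IsPathOfLength E c c n})
    (path_zero' E c) (fun a ha b hb => path_trans' ha hb) (gcd_loops_at' hp)
  refine ⟨N, fun i hi => ?_⟩
  have loop : IsPathOfLength E c c (i * p) := hN i hi
  have total := path_trans' p1 (path_trans' loop p2)
  rwa [show m + (i * p + (l - m)) = l + i * p by omega] at total
end

section
/- Let G = (V, E) be a strongly connected digraph containing at least one cycle, let p be its period, and let c be a vertex of G. Then there exists N such that for every integer i ≥ N, G contains a cycle of length i·p passing through c. -/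
variable {V : Type*}

/-! The lengths of closed paths at `c` form an additive submonoid of `ℕ`. If `v` lies on a cycle of
length `n` and `a`, `b` are the lengths of paths `c → v → c`, then `a + b` and `a + n + b` are
closed path lengths at `c`; hence this submonoid has the same gcd `p` as the set of all cycle
lengths. A submonoid of `ℕ` contains every sufficiently large multiple of its gcd. -/

namespace IsPathOfLength

variable {E : V → V → Prop}

theorem zero (u : V) : IsPathOfLength E u u 0 :=
  ⟨fun _ ↦ u, rfl, rfl, fun _ h ↦ absurd h (Nat.not_lt_zero _)⟩

theorem append_s9 {u v w : V} {m n : ℕ} (h₁ : IsPathOfLength E u v m)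
    (h₂ : IsPathOfLength E v w n) : IsPathOfLength E u w (m + n) := by
  obtain ⟨f, hf0, hfm, hf⟩ := h₁
  obtain ⟨g, hg0, hgn, hg⟩ := h₂
  refine ⟨fun i ↦ if i ≤ m then f i else g (i - m), by simp [hf0], ?_, fun i hi ↦ ?_⟩
  · rcases n.eq_zero_or_pos with rfl | hn
    · simp [hfm, ← hgn, hg0]
    · simp [show ¬m + n ≤ m by omega, hgn]
  · dsimp only
    split_ifs with h h' h'
    · exact hf i (by omega)
    · obtain rfl : i = m := by omega
      simpa [hfm, ← hg0] using hg 0 (by omega)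
    · omega
    · simpa [show i + 1 - m = i - m + 1 by omega] using hg (i - m) (by omega)

end IsPathOfLength

def closedPathLengths (E : V → V → Prop) (c : V) : AddSubmonoid ℕ where
  carrier := {n | IsPathOfLength E c c n}
  zero_mem' := IsPathOfLength.zero c
  add_mem' := IsPathOfLength.append_s9

theorem IsSetGcd.eq_setGcd {S : Set ℕ} {p : ℕ} (h : IsSetGcd S p) : p = Nat.setGcd S :=
  Nat.dvd_antisymm (Nat.dvd_setGcd_iff.mpr h.1) (h.2 _ fun _ ↦ Nat.setGcd_dvd_of_mem)

theorem setGcd_closedPathLengths {E : V → V → Prop} (hsc : StronglyConnected E) (c : V) :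
    Nat.setGcd (closedPathLengths E c) = Nat.setGcd (cycleLengths E) := by
  refine Nat.dvd_antisymm (Nat.dvd_setGcd_iff.mpr ?_) (Nat.dvd_setGcd_iff.mpr ?_)
  · rintro n ⟨-, v, hv⟩
    obtain ⟨a, ha⟩ := hsc c v
    obtain ⟨b, hb⟩ := hsc v c
    have h₁ := Nat.setGcd_dvd_of_mem (s := closedPathLengths E c) (ha.append_s9 hb)
    have h₂ := Nat.setGcd_dvd_of_mem (s := closedPathLengths E c) ((ha.append_s9 hv).append_s9 hb)
    rw [show a + n + b = a + b + n by ring] at h₂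
    exact (Nat.dvd_add_right h₁).mp h₂
  · intro n hn
    rcases n.eq_zero_or_pos with rfl | hpos
    · exact dvd_zero _
    · exact Nat.setGcd_dvd_of_mem ⟨hpos, c, hn⟩

/-- In a strongly connected digraph with at least one cycle and period `p`,
for every vertex `c` and all large enough `i` there is a cycle of length `i·p` through `c`. -/
theorem eventually_cycle_through_vertex (E : V → V → Prop)
    (hsc : StronglyConnected E) (hcyc : (cycleLengths E).Nonempty)
    (p : ℕ) (hp : IsSetGcd (cycleLengths E) p) (c : V) :
    ∃ N : ℕ, ∀ i ≥ N, 0 < i * p ∧ IsPathOfLength E c c (i * p) := by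
  obtain ⟨n, hn⟩ := hcyc
  have hp_pos : 0 < p := Nat.pos_of_dvd_of_pos (hp.1 n hn) hn.1
  have hp_eq : p = Nat.setGcd (closedPathLengths E c) :=
    hp.eq_setGcd.trans (setGcd_closedPathLengths hsc c).symm
  obtain ⟨N, hN⟩ := Nat.exists_mem_closure_of_ge (closedPathLengths E c : Set ℕ)
  refine ⟨N + 1, fun i hi ↦ ⟨Nat.mul_pos (by omega) hp_pos, ?_⟩⟩
  have hmem := hN (i * p) (by nlinarith) (hp_eq ▸ dvd_mul_left p i)
  rwa [AddSubmonoid.closure_eq] at hmem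
end

section
/- Let G = (V, E) be an acyclic digraph with distinct vertices s, t, t' such that s has no incoming edges and t and t' have no outgoing edges, and let G' be obtained from G by subdividing every edge and adding the three edges (s, t), (t', t) and (t, s). Then every cycle of G' contains the edge (t, s); equivalently, the digraph obtained from G' by removing the edge (t, s) is acyclic. -/
variable {V : Type*}

/-- The edge relation of the digraph `G'` obtained from `G` by subdividing every edge
(`Sum.inr (a, b)` is the new vertex `x_{ab}` subdividing the edge `(a, b)`) and adding
the three edges `(s, t)`, `(t', t)` and `(t, s)`. -/
def SubdivAdded (E : V → V → Prop) (s t tp : V) :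
    (V ⊕ V × V) → (V ⊕ V × V) → Prop := fun x y =>
  (∃ a b, E a b ∧ x = Sum.inl a ∧ y = Sum.inr (a, b)) ∨
  (∃ a b, E a b ∧ x = Sum.inr (a, b) ∧ y = Sum.inl b) ∨
  (x = Sum.inl s ∧ y = Sum.inl t) ∨
  (x = Sum.inl tp ∧ y = Sum.inl t) ∨
  (x = Sum.inl t ∧ y = Sum.inl s)

def SubOnly (E : V → V → Prop) (x y : V ⊕ V × V) : Prop :=
  (∃ a b, E a b ∧ x = Sum.inl a ∧ y = Sum.inr (a, b)) ∨
  (∃ a b, E a b ∧ x = Sum.inr (a, b) ∧ y = Sum.inl b)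

lemma even_walk (E : V → V → Prop) : ∀ n : ℕ, ∀ (a c : V) (f : ℕ → V ⊕ V × V),
    f 0 = Sum.inl a → f n = Sum.inl c → (∀ i < n, SubOnly E (f i) (f (i + 1))) →
    ∃ m, n = 2 * m ∧ IsPathOfLength E a c m := by
  intro n
  induction n using Nat.strong_induction_on with
  | _ n ih =>
    intro a c f h0 hn hE
    rcases Nat.eq_zero_or_pos n with h | h
    · subst h
      have : a = c := Sum.inl.inj (h0.symm.trans hn)
      exact ⟨0, rfl, fun _ => a, rfl, this, by omega⟩
    · rcases hE 0 h with ⟨a', b, hab, hx, hy⟩ | ⟨a', b, hab, hx, hy⟩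
      · obtain rfl : a' = a := Sum.inl.inj (hx.symm.trans h0)
        rcases Nat.lt_or_ge n 2 with h2 | h2
        · interval_cases n
          · rw [hy] at hn; exact absurd hn (by simp)
        · rcases hE 1 (by omega) with ⟨a2, b2, hab2, hx2, hy2⟩ | ⟨a2, b2, hab2, hx2, hy2⟩
          · rw [hy] at hx2; exact absurd hx2 (by simp)
          · have hb : (a2, b2) = (a', b) := by
              have := hx2.symm.trans hy
              exact Sum.inr.inj this
            have hb2 : b2 = b := by injection hb with h1 h2
            have hf2 : f 2 = Sum.inl b := hb2 ▸ hy2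
            obtain ⟨m, hm, g, hg0, hgm, hgE⟩ :=
              ih (n - 2) (by omega) b c (fun i => f (i + 2)) hf2
                (by show f (n - 2 + 2) = Sum.inl c; rw [show n - 2 + 2 = n by omega]; exact hn)
                (fun i hi => hE (i + 2) (by omega))
            refine ⟨m + 1, by omega, fun i => if i = 0 then a' else g (i - 1), by simp, ?_, ?_⟩
            · simp [hgm]
            · intro i hi
              rcases Nat.eq_zero_or_pos i with h0' | h0'
              · subst h0'
                simpa [hg0] using hab
              · have h1 : ¬ (i = 0) := by omega
                have h2' : ¬ (i + 1 = 0) := by omega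
                simp only [h1, h2', if_false]
                have := hgE (i - 1) (by omega)
                rwa [show i - 1 + 1 = i + 1 - 1 by omega] at this
      · rw [h0] at hx; exact absurd hx (by simp)

/-- If `G` is acyclic, `s` has no incoming edges and `t, t'` have no
outgoing edges, then every cycle of `G'` contains the edge `(t, s)`; equivalently,
removing the edge `(t, s)` from `G'` yields an acyclic digraph. -/
theorem every_cycle_contains_ts (E : V → V → Prop) (s t tp : V)
    (hac : Acyclic E) (hst : s ≠ t) (hstp : s ≠ tp) (http : t ≠ tp)
    (hs : ∀ u, ¬ E u s) (ht : ∀ u, ¬ E t u) (htp : ∀ u, ¬ E tp u) :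
    (∀ (v : V ⊕ V × V) (n : ℕ) (f : ℕ → V ⊕ V × V), 0 < n → f 0 = v → f n = v →
        (∀ i < n, SubdivAdded E s t tp (f i) (f (i + 1))) →
        ∃ i < n, f i = Sum.inl t ∧ f (i + 1) = Sum.inl s) ∧
    Acyclic (fun x y : V ⊕ V × V =>
      SubdivAdded E s t tp x y ∧ ¬(x = Sum.inl t ∧ y = Sum.inl s)) := by

  have part2 : Acyclic (fun x y : V ⊕ V × V =>
      SubdivAdded E s t tp x y ∧ ¬(x = Sum.inl t ∧ y = Sum.inl s)) := by
    intro v n hn hP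
    obtain ⟨f, h0, hfn, hE⟩ := hP
    have hnot_t : ∀ j < n, f j ≠ Sum.inl t := by
      intro j hj hjt
      obtain ⟨he, hne⟩ := hE j hj
      rcases he with ⟨a, b, hab, hx, hy⟩ | ⟨a, b, hab, hx, hy⟩ | ⟨hx, hy⟩ | ⟨hx, hy⟩ | ⟨hx, hy⟩
      · have : a = t := (Sum.inl.inj (hx.symm.trans hjt))
        exact ht b (this ▸ hab)
      · rw [hjt] at hx; exact absurd hx (by simp)
      · exact hst (Sum.inl.inj (hx.symm.trans hjt))
      · exact http (Sum.inl.inj (hx.symm.trans hjt)).symm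
      · exact hne ⟨hx, hy⟩
    have hsub : ∀ i < n, SubOnly E (f i) (f (i + 1)) := by
      intro i hi
      obtain ⟨he, hne⟩ := hE i hi
      have hnt : f (i + 1) ≠ Sum.inl t := by
        rcases Nat.lt_or_ge (i + 1) n with h | h
        · exact hnot_t (i + 1) h
        · have : i + 1 = n := by omega
          rw [this, hfn, ← h0]
          exact hnot_t 0 hn
      rcases he with h1 | h2 | ⟨hx, hy⟩ | ⟨hx, hy⟩ | ⟨hx, hy⟩
      · exact Or.inl h1
      · exact Or.inr h2
      · exact absurd hy hnt
      · exact absurd hy hnt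
      · exact absurd ⟨hx, hy⟩ hne
    rcases hv : v with a | ⟨a, b⟩
    · rw [hv] at h0 hfn
      obtain ⟨m, hm, hp⟩ := even_walk E n a a f h0 hfn hsub
      exact hac a m (by omega) hp
    · rw [hv] at h0 hfn
      rcases hsub 0 hn with ⟨a', b', hab, hx, hy⟩ | ⟨a', b', hab, hx, hy⟩
      · rw [h0] at hx; exact absurd hx (by simp)
      · have hab' : (a, b) = (a', b') := Sum.inr.inj (h0.symm.trans hx)
        set f' : ℕ → V ⊕ V × V := fun i => if i = n then Sum.inl b' else f (i + 1) with hf'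
        have h0' : f' 0 = Sum.inl b' := by
          simp only [hf']
          rw [if_neg (by omega)]
          exact hy
        have hn' : f' n = Sum.inl b' := by simp [hf']
        have hE' : ∀ i < n, SubOnly E (f' i) (f' (i + 1)) := by
          intro i hi
          rcases Nat.lt_or_ge (i + 1) n with h | h
          · simp only [hf']
            rw [if_neg (by omega), if_neg (by omega)]
            exact hsub (i + 1) h
          · have hin : i + 1 = n := by omega
            simp only [hf']
            rw [if_neg (by omega), hin, if_pos rfl, hfn, hab']
            exact Or.inr ⟨a', b', hab, rfl, rfl⟩
        obtain ⟨m, hm, hp⟩ := even_walk E n b' b' f' h0' hn' hE'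
        exact hac b' m (by omega) hp
  refine ⟨?_, part2⟩
  intro v n f hn h0 hfn hE
  by_contra hcon
  push_neg at hcon
  exact part2 v n hn ⟨f, h0, hfn, fun i hi =>
    ⟨hE i hi, fun ⟨ha, hb⟩ => hcon i hi ha hb⟩⟩
end

section
/- Let G = (V, E) be an acyclic digraph with distinct vertices s, t, t' such that s has no incoming edges and t and t' have no outgoing edges, and let G' be obtained from G by subdividing every edge and adding the three edges (s, t), (t', t) and (t, s). Then G' contains a cycle of odd length if and only if G contains an (s,t)-path. -/
variable {V : Type*}

private lemma hasPath_snoc {E : V → V → Prop} {u v w : V}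
    (h : HasPath E u v) (he : E v w) : HasPath E u w := by
  obtain ⟨n, f, h0, hn, hf⟩ := h
  refine ⟨n + 1, fun i => if i ≤ n then f i else w, by simp [h0], by simp, ?_⟩
  intro i hi
  by_cases hi' : i < n
  · simpa [Nat.le_of_lt hi', Nat.succ_le_of_lt hi'] using hf i hi'
  · have hin : i = n := by omega
    subst hin
    simp [hn, he]

private lemma cycle_rotate {α : Type*} {E : α → α → Prop} {f : ℕ → α} {n k : ℕ}
    (hcyc : f n = f 0) (he : ∀ i < n, E (f i) (f (i + 1))) (hk : k ≤ n) :
    ∃ g : ℕ → α, g 0 = f k ∧ g n = f k ∧ ∀ i < n, E (g i) (g (i + 1)) := by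
  refine ⟨fun i => if i + k ≤ n then f (i + k) else f (i + k - n), by simp [hk], ?_, ?_⟩
  · by_cases h : n + k ≤ n
    · have hk0 : k = 0 := by omega
      subst hk0
      simpa using hcyc
    · simp only [if_neg h]
      congr 1
      omega
  · intro i hi
    by_cases h1 : i + 1 + k ≤ n
    · have h2 : i + k ≤ n := by omega
      simp only [if_pos h1, if_pos h2]
      have := he (i + k) (by omega)
      simpa [Nat.add_right_comm] using this
    · by_cases h2 : i + k ≤ n
      · have hik : i + k = n := by omega
        simp only [if_pos h2, if_neg h1]
        have h3 : i + 1 + k - n = 1 := by omega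
        rw [h3, hik, hcyc]
        exact he 0 (by omega)
      · simp only [if_neg h1, if_neg h2]
        have h3 : i + 1 + k - n = (i + k - n) + 1 := by omega
        rw [h3]
        exact he (i + k - n) (by omega)

/-- Goodness predicate: vertices of `G'` reachable from `inl s` when there is no
`(s,t)`-path in `G`. -/
private def Rgood (E : V → V → Prop) (s t : V) : (V ⊕ V × V) → Prop := fun x =>
  x = Sum.inl t ∨ (∃ v, x = Sum.inl v ∧ HasPath E s v ∧ v ≠ t) ∨
    (∃ a b, x = Sum.inr (a, b) ∧ E a b ∧ HasPath E s a)

open Classical in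
/-- Parity coloring of the vertices of `G'`. -/
private noncomputable def Cfun (t : V) : (V ⊕ V × V) → ZMod 2 :=
  Sum.elim (fun v => if v = t then 1 else 0) (fun _ => 1)

private lemma rgood_step {E : V → V → Prop} {s t tp : V}
    (hpath : ¬ HasPath E s t) (ht : ∀ u, ¬ E t u) (hst : s ≠ t) (http : t ≠ tp)
    {x y : V ⊕ V × V} (hx : Rgood E s t x) (hxy : SubdivAdded E s t tp x y) :
    Rgood E s t y ∧ Cfun t y = Cfun t x + 1 := by
  have hss : HasPath E s s := ⟨0, fun _ => s, rfl, rfl, by omega⟩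
  rcases hxy with ⟨a, b, hab, hx1, hy1⟩ | ⟨a, b, hab, hx1, hy1⟩ | ⟨hx1, hy1⟩ |
      ⟨hx1, hy1⟩ | ⟨hx1, hy1⟩
  · -- x = inl a, y = inr (a,b)
    rcases hx with h | ⟨v, hv, hsv, hvt⟩ | ⟨a', b', h, _, _⟩
    · rw [hx1] at h
      exact absurd hab (by cases Sum.inl_injective h; exact ht b)
    · rw [hx1] at hv
      cases Sum.inl_injective hv
      subst hy1
      refine ⟨Or.inr (Or.inr ⟨a, b, rfl, hab, hsv⟩), ?_⟩
      rw [hx1]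
      simp [Cfun, hvt]
    · rw [hx1] at h; simp at h
  · -- x = inr (a,b), y = inl b
    rcases hx with h | ⟨v, hv, _, _⟩ | ⟨a', b', h, hab', hsa'⟩
    · rw [hx1] at h; simp at h
    · rw [hx1] at hv; simp at hv
    · rw [hx1] at h
      have hab2 : a = a' ∧ b = b' := Prod.mk.inj (Sum.inr_injective h)
      obtain ⟨rfl, rfl⟩ := hab2
      have hsb : HasPath E s b := hasPath_snoc hsa' hab
      have hbt : b ≠ t := fun hbt => hpath (hbt ▸ hsb)
      subst hy1
      refine ⟨Or.inr (Or.inl ⟨b, rfl, hsb, hbt⟩), ?_⟩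
      rw [hx1]
      simp only [Cfun, Sum.elim_inl, Sum.elim_inr, if_neg hbt]
      decide
  · -- x = inl s, y = inl t
    subst hx1; subst hy1
    refine ⟨Or.inl rfl, ?_⟩
    simp [Cfun, hst]
  · -- x = inl tp, y = inl t
    subst hx1; subst hy1
    refine ⟨Or.inl rfl, by simp [Cfun, Ne.symm http]⟩
  · -- x = inl t, y = inl s
    subst hx1; subst hy1
    refine ⟨Or.inr (Or.inl ⟨s, rfl, hss, hst⟩), ?_⟩
    simp only [Cfun, Sum.elim_inl, if_pos rfl, if_neg hst]
    decide

/-- If `G` is acyclic, `s` has no incoming edges and `t, t'` have no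
outgoing edges, then `G'` contains a cycle of odd length iff `G` has an `(s,t)`-path. -/
theorem odd_cycle_iff_st_path (E : V → V → Prop) (s t tp : V)
    (hac : Acyclic E) (hst : s ≠ t) (hstp : s ≠ tp) (http : t ≠ tp)
    (hs : ∀ u, ¬ E u s) (ht : ∀ u, ¬ E t u) (htp : ∀ u, ¬ E tp u) :
    (∃ n ∈ cycleLengths (SubdivAdded E s t tp), Odd n) ↔ HasPath E s t := by
  constructor
  · rintro ⟨n, ⟨hnpos, v, f, hf0, hfn, hfe⟩, hodd⟩
    by_contra hpath
    have hcyc : f n = f 0 := by rw [hf0, hfn]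
    by_cases hks : ∃ k ≤ n, f k = Sum.inl s
    · -- rotate cycle to start at inl s, then use the parity invariant
      obtain ⟨k, hk, hfk⟩ := hks
      obtain ⟨g, hg0, hgn, hge⟩ := cycle_rotate hcyc hfe hk
      rw [hfk] at hg0 hgn
      have key : ∀ i, i ≤ n → Rgood E s t (g i) ∧ Cfun t (g i) = (i : ZMod 2) := by
        intro i
        induction i with
        | zero =>
          intro _
          have hss : HasPath E s s := ⟨0, fun _ => s, rfl, rfl, by omega⟩
          refine ⟨?_, ?_⟩
          · rw [hg0]; exact Or.inr (Or.inl ⟨s, rfl, hss, hst⟩)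
          · rw [hg0]; simp [Cfun, hst]
        | succ i ih =>
          intro hle
          obtain ⟨hr, hc⟩ := ih (by omega)
          obtain ⟨hr', hc'⟩ := rgood_step hpath ht hst http hr (hge i (by omega))
          refine ⟨hr', ?_⟩
          rw [hc', hc]
          push_cast
          ring
      have hcn := (key n le_rfl).2
      rw [hgn] at hcn
      have h0 : Cfun t (Sum.inl s) = 0 := by simp [Cfun, hst]
      rw [h0] at hcn
      have h2 : (2 : ℕ) ∣ n := by
        have := (ZMod.natCast_eq_zero_iff n 2).mp hcn.symm
        exact this
      rw [Nat.odd_iff] at hodd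
      omega
    · -- no visit to inl s : all edges are subdivision edges, parity flips each step
      push_neg at hks
      have ht_step : ∀ j, j < n → f j ≠ Sum.inl t := by
        intro j hj hfj
        rcases hfe j hj with ⟨a, b, hab, hx1, _⟩ | ⟨a, b, _, hx1, _⟩ | ⟨hx1, _⟩ |
            ⟨hx1, _⟩ | ⟨_, hy1⟩
        · rw [hfj] at hx1; cases Sum.inl_injective hx1; exact ht b hab
        · rw [hfj] at hx1; simp at hx1
        · rw [hfj] at hx1; exact hst (Sum.inl_injective hx1).symm
        · rw [hfj] at hx1; exact http (Sum.inl_injective hx1)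
        · exact hks (j + 1) (by omega) hy1
      have hflip : ∀ i, i < n →
          Sum.elim (fun _ : V => (0 : ZMod 2)) (fun _ : V × V => 1) (f (i + 1)) =
          Sum.elim (fun _ : V => (0 : ZMod 2)) (fun _ : V × V => 1) (f i) + 1 := by
        intro i hi
        rcases hfe i hi with ⟨a, b, _, hx1, hy1⟩ | ⟨a, b, _, hx1, hy1⟩ | ⟨hx1, _⟩ |
            ⟨_, hy1⟩ | ⟨hx1, _⟩
        · rw [hx1, hy1]
          simp only [Sum.elim_inl, Sum.elim_inr]
          decide
        · rw [hx1, hy1]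
          simp only [Sum.elim_inl, Sum.elim_inr]
          decide
        · exact absurd hx1 (hks i (by omega))
        · -- f (i+1) = inl t
          exfalso
          by_cases hin : i + 1 < n
          · exact ht_step (i + 1) hin hy1
          · have : i + 1 = n := by omega
            exact ht_step 0 (by omega) (by rw [← hcyc, ← this]; exact hy1)
        · exact absurd hx1 (ht_step i hi)
      have key : ∀ i, i ≤ n →
          Sum.elim (fun _ : V => (0 : ZMod 2)) (fun _ : V × V => 1) (f i) =
          Sum.elim (fun _ : V => (0 : ZMod 2)) (fun _ : V × V => 1) (f 0) + (i : ZMod 2) := by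
        intro i
        induction i with
        | zero => intro _; simp
        | succ i ih =>
          intro hle
          rw [hflip i (by omega), ih (by omega)]
          push_cast
          ring
      have hcn := key n le_rfl
      rw [hcyc] at hcn
      have h2 : (2 : ℕ) ∣ n := by
        have h0 : (n : ZMod 2) = 0 := by
          have h := hcn
          nth_rewrite 1 [← add_zero (Sum.elim (fun _ : V => (0 : ZMod 2))
            (fun _ : V × V => 1) (f 0))] at h
          exact (add_left_cancel h).symm
        exact (ZMod.natCast_eq_zero_iff n 2).mp h0
      rw [Nat.odd_iff] at hodd
      omega
  · rintro ⟨m, f, hf0, hfm, hfe⟩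
    refine ⟨2 * m + 1, ⟨by omega, Sum.inl s,
      fun i => if i = 2 * m + 1 then Sum.inl s
        else if i % 2 = 0 then Sum.inl (f (i / 2)) else Sum.inr (f (i / 2), f (i / 2 + 1)),
      ?_, ?_, ?_⟩, ⟨m, by ring⟩⟩
    · simp [hf0]
    · simp
    · intro i hi
      by_cases h2m : i = 2 * m
      · subst h2m
        have h1 : ¬ (2 * m = 2 * m + 1) := by omega
        have h2 : (2 * m) % 2 = 0 := by omega
        have h3 : (2 * m) / 2 = m := by omega
        simp only [if_neg h1, if_pos h2, h3, if_pos rfl, hfm]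
        exact Or.inr (Or.inr (Or.inr (Or.inr ⟨rfl, rfl⟩)))
      · have hilt : i < 2 * m := by omega
        have hne1 : ¬ (i = 2 * m + 1) := by omega
        have hne2 : ¬ (i + 1 = 2 * m + 1) := by omega
        by_cases hev : i % 2 = 0
        · have hj : i / 2 < m := by omega
          have hodd1 : ¬ ((i + 1) % 2 = 0) := by omega
          have hdiv : (i + 1) / 2 = i / 2 := by omega
          simp only [if_neg hne1, if_pos hev, if_neg hne2, if_neg hodd1, hdiv]
          exact Or.inl ⟨f (i / 2), f (i / 2 + 1), hfe (i / 2) hj, rfl, rfl⟩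
        · have hj : i / 2 < m := by omega
          have hev1 : (i + 1) % 2 = 0 := by omega
          have hdiv : (i + 1) / 2 = i / 2 + 1 := by omega
          simp only [if_neg hne1, if_neg hev, if_neg hne2, if_pos hev1, hdiv]
          exact Or.inr (Or.inl ⟨f (i / 2), f (i / 2 + 1), hfe (i / 2) hj, rfl, rfl⟩)
end

section
/- Let G = (V, E) be an acyclic digraph with distinct vertices s, t, t' such that s has no incoming edges and t and t' have no outgoing edges, and let G' be obtained from G by subdividing every edge and adding the three edges (s, t), (t', t) and (t, s). Then G' contains a cycle, and the period of G' equals 1 if G contains an (s,t)-path, and equals 2 otherwise. -/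
variable {V : Type*}

section Aux

variable {E : V → V → Prop}

theorem path_concat {u v w : V} {m k : ℕ} (h1 : IsPathOfLength E u v m)
    (h2 : IsPathOfLength E v w k) : IsPathOfLength E u w (m + k) := by
  obtain ⟨f, hf0, hfm, hfe⟩ := h1
  obtain ⟨g, hg0, hgk, hge⟩ := h2
  refine ⟨fun i => if i < m then f i else g (i - m), ?_, ?_, ?_⟩
  · by_cases h : 0 < m
    · simpa [h] using hf0
    · have hm : m = 0 := by omega
      subst hm
      simp only [Nat.lt_irrefl, if_false, Nat.sub_zero, hg0]
      rw [← hfm, hf0]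
  · by_cases h : m + k < m
    · omega
    · simp only [h, if_false]
      rw [Nat.add_sub_cancel_left] at *
      exact hgk
  · intro i hi
    by_cases h : i < m
    · by_cases h2 : i + 1 < m
      · simpa [h, h2] using hfe i h
      · have hi1 : i + 1 = m := by omega
        have heq : g (i + 1 - m) = f m := by rw [hi1, Nat.sub_self, hg0, hfm]
        simp only [h, if_true, h2, if_false, heq]
        exact hi1 ▸ hfe i h
    · have h2 : ¬ (i + 1 < m) := by omega
      simp only [h, h2, if_false]
      have : i + 1 - m = (i - m) + 1 := by omega
      rw [this]
      exact hge (i - m) (by omega)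

theorem path_single {u v : V} (h : E u v) : IsPathOfLength E u v 1 :=
  ⟨fun i => if i = 0 then u else v, by simp, by simp, by intro i hi; interval_cases i; simpa⟩

theorem path_prefix {f : ℕ → V} {n : ℕ} (he : ∀ i < n, E (f i) (f (i+1))) {m : ℕ} (hm : m ≤ n) :
    IsPathOfLength E (f 0) (f m) m :=
  ⟨f, rfl, rfl, fun i hi => he i (lt_of_lt_of_le hi hm)⟩

theorem path_suffix {f : ℕ → V} {n : ℕ} (he : ∀ i < n, E (f i) (f (i+1))) {m : ℕ} (hm : m ≤ n) :
    IsPathOfLength E (f m) (f n) (n - m) :=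
  ⟨fun i => f (m + i), rfl, by show f (m + (n - m)) = f n; rw [Nat.add_sub_cancel' hm],
    fun i hi => by
      have := he (m + i) (by omega); simpa [Nat.add_assoc] using this⟩

theorem hasPath_trans {u v w : V} (h1 : HasPath E u v) (h2 : HasPath E v w) : HasPath E u w := by
  obtain ⟨m, h1⟩ := h1; obtain ⟨k, h2⟩ := h2; exact ⟨m + k, path_concat h1 h2⟩

end Aux

section Subdiv

variable {E : V → V → Prop} {s t tp : V}

/-- A subdivision-type edge of the big graph. -/
def SubEdge (E : V → V → Prop) (x y : V ⊕ V × V) : Prop :=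
  (∃ a b, E a b ∧ x = Sum.inl a ∧ y = Sum.inr (a, b)) ∨
  (∃ a b, E a b ∧ x = Sum.inr (a, b) ∧ y = Sum.inl b)

theorem alt {f : ℕ → V ⊕ V × V} {v : V} (hf0 : f 0 = Sum.inl v) {k : ℕ}
    (he : ∀ i < k, SubEdge E (f i) (f (i+1))) :
    ∀ i ≤ k, (i % 2 = 0 → ∃ w, f i = Sum.inl w ∧ IsPathOfLength E v w (i/2)) ∧
      (i % 2 = 1 → ∃ a b, E a b ∧ f i = Sum.inr (a, b) ∧ IsPathOfLength E v a (i/2)) := by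
  intro i
  induction i with
  | zero => intro _; exact ⟨fun _ => ⟨v, hf0, ⟨fun _ => v, rfl, rfl, by omega⟩⟩, by omega⟩
  | succ i ih =>
    intro hik
    have ihi := ih (by omega)
    have hedge := he i (by omega)
    rcases Nat.even_or_odd i with hpar | hpar
    · have h0 : i % 2 = 0 := Nat.even_iff.mp hpar
      obtain ⟨w, hw, hpath⟩ := ihi.1 h0
      rcases hedge with ⟨a, b, hab, hxa, hyb⟩ | ⟨a, b, hab, hxa, hyb⟩
      · -- type A
        rw [hw] at hxa
        have haw : a = w := by injection hxa with h; exact h.symm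
        subst haw
        refine ⟨fun h => by omega, fun _ => ⟨a, b, hab, hyb, ?_⟩⟩
        have : (i+1)/2 = i/2 := by omega
        rw [this]; exact hpath
      · rw [hw] at hxa; exact absurd hxa (by simp)
    · have h1 : i % 2 = 1 := Nat.odd_iff.mp hpar
      obtain ⟨a, b, hab, hf, hpath⟩ := ihi.2 h1
      rcases hedge with ⟨a', b', hab', hxa, hyb⟩ | ⟨a', b', hab', hxa, hyb⟩
      · rw [hf] at hxa; exact absurd hxa (by simp)
      · rw [hf] at hxa
        have : a' = a ∧ b' = b := by
          have := hxa; simp at this; exact ⟨this.1.symm, this.2.symm⟩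
        obtain ⟨ha', hb'⟩ := this; subst ha'; subst hb'
        refine ⟨fun _ => ⟨b', hyb, ?_⟩, fun h => by omega⟩
        have : (i+1)/2 = i/2 + 1 := by omega
        rw [this]
        exact path_concat hpath (path_single hab')

end Subdiv

section Pass

variable {E : V → V → Prop} {s t tp : V}

theorem edge_classify (http : t ≠ tp) {x y : V ⊕ V × V}
    (hx : x ≠ Sum.inl t) (hy : y ≠ Sum.inl t)
    (h : SubdivAdded E s t tp x y) : SubEdge E x y := by
  rcases h with h | h | h | h | h
  · exact Or.inl h
  · exact Or.inr h
  · exact absurd h.2 hy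
  · exact absurd h.2 hy
  · exact absurd h.1 hx

theorem out_t (hst : s ≠ t) (http : t ≠ tp) (ht : ∀ u, ¬ E t u) {y : V ⊕ V × V}
    (h : SubdivAdded E s t tp (Sum.inl t) y) : y = Sum.inl s := by
  rcases h with ⟨a, b, hab, hxa, _⟩ | ⟨a, b, _, hxa, _⟩ | ⟨hx, _⟩ | ⟨hx, _⟩ | ⟨_, hy⟩
  · have : t = a := by injection hxa
    exact absurd (this ▸ hab) (ht b)
  · exact absurd hxa (by simp)
  · exact absurd (show t = s by injection hx) (Ne.symm hst)
  · exact absurd (show t = tp by injection hx) http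
  · exact hy

/-- Every cycle in the big graph passes through `Sum.inl t`. -/
theorem pass_through_t (hac : Acyclic E) (http : t ≠ tp)
    {f : ℕ → V ⊕ V × V} {n : ℕ} (hn : 0 < n) (hcl : f n = f 0)
    (he : ∀ i < n, SubdivAdded E s t tp (f i) (f (i+1))) :
    ∃ m ≤ n, f m = Sum.inl t := by
  by_contra hcon
  push_neg at hcon
  have hsub : ∀ i < n, SubEdge E (f i) (f (i+1)) := fun i hi =>
    edge_classify http (hcon i (by omega)) (hcon (i+1) (by omega)) (he i hi)
  rcases hf0 : f 0 with v | p
  · have halt := alt hf0 hsub n le_rfl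
    rcases Nat.even_or_odd n with hpar | hpar
    · obtain ⟨w, hw, hpath⟩ := halt.1 (Nat.even_iff.mp hpar)
      rw [hcl, hf0] at hw
      have hwv : v = w := by injection hw
      subst hwv
      have h0 := Nat.even_iff.mp hpar
      exact hac v (n/2) (by omega) hpath
    · obtain ⟨a, b, _, hw, _⟩ := halt.2 (Nat.odd_iff.mp hpar)
      rw [hcl, hf0] at hw
      exact absurd hw (by simp)
  · -- f 0 = inr p : shift by one
    have he0 := hsub 0 hn
    rcases he0 with ⟨a, b, hab, hxa, _⟩ | ⟨a, b, hab, hxa, hyb⟩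
    · rw [hf0] at hxa; exact absurd hxa (by simp)
    · rw [hf0] at hxa
      have hpab : p = (a, b) := by injection hxa
      have hsub' : ∀ i < n - 1, SubEdge E (f (1+i)) (f (1+i+1)) := fun i hi => by
        have := hsub (1+i) (by omega)
        simpa [Nat.add_comm, Nat.add_assoc] using this
      have halt := alt (E := E) (f := fun i => f (1+i)) (v := b) (by simpa using hyb) hsub' (n-1) le_rfl
      have hend : f (1 + (n-1)) = Sum.inr (a, b) := by
        have : 1 + (n-1) = n := by omega
        rw [this, hcl, hf0, hpab]
      rcases Nat.even_or_odd (n-1) with hpar | hpar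
      · obtain ⟨w, hw, _⟩ := halt.1 (Nat.even_iff.mp hpar)
        have hw' : f (1 + (n-1)) = Sum.inl w := hw
        rw [hend] at hw'
        exact absurd hw' (by simp)
      · obtain ⟨a', b', hab', hw, hpath⟩ := halt.2 (Nat.odd_iff.mp hpar)
        have hw' : f (1 + (n-1)) = Sum.inr (a', b') := hw
        rw [hend] at hw'
        have hw := hw'
        have : a' = a ∧ b' = b := by simpa using hw.symm
        obtain ⟨rfl, rfl⟩ := this
        have : IsPathOfLength E b' b' ((n-1)/2 + 1) := path_concat hpath (path_single hab')
        exact hac b' _ (by omega) this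

end Pass

section Even

variable {E : V → V → Prop} {s t tp : V}

/-- A segment from `inl s` to `inl t` avoiding `inl t` in between has odd length
(so together with the initial `t → s` edge the loop piece is even). -/
theorem seg_even (hnp : ¬ HasPath E s t) (hstp : s ≠ tp) (http : t ≠ tp)
    {g : ℕ → V ⊕ V × V} {k : ℕ} (hk : 1 ≤ k)
    (hg0 : g 0 = Sum.inl s) (hgk : g k = Sum.inl t)
    (hmid : ∀ j < k, g j ≠ Sum.inl t)
    (he : ∀ i < k, SubdivAdded E s t tp (g i) (g (i+1))) : 2 ∣ (k + 1) := by
  have hsub : ∀ i < k - 1, SubEdge E (g i) (g (i+1)) := fun i hi =>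
    edge_classify http (hmid i (by omega)) (hmid (i+1) (by omega)) (he i (by omega))
  have halt := alt hg0 hsub (k-1) le_rfl
  have hlast := he (k-1) (by omega)
  have hk1 : k - 1 + 1 = k := by omega
  rw [hk1] at hlast
  rcases hlast with ⟨a, b, hab, hxa, hyb⟩ | ⟨a, b, hab, hxa, hyb⟩ | ⟨hx, _⟩ | ⟨hx, _⟩ | ⟨hx, _⟩
  · rw [hgk] at hyb; exact absurd hyb (by simp)
  · -- subdivision edge into t : extract an (s,t)-path in G, contradiction
    rw [hgk] at hyb
    have hbt : t = b := by injection hyb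
    subst hbt
    rcases Nat.even_or_odd (k-1) with hpar | hpar
    · obtain ⟨w, hw, _⟩ := halt.1 (Nat.even_iff.mp hpar)
      rw [hxa] at hw; exact absurd hw (by simp)
    · obtain ⟨a', b', _, hw, hpath⟩ := halt.2 (Nat.odd_iff.mp hpar)
      rw [hxa] at hw
      have heq : a = a' ∧ t = b' := by simpa using hw
      obtain ⟨rfl, rfl⟩ := heq
      exact absurd ⟨(k-1)/2 + 1, path_concat hpath (path_single hab)⟩ hnp
  · -- last edge is (s,t): g (k-1) = inl s, even position
    rcases Nat.even_or_odd (k-1) with hpar | hpar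
    · have := Nat.even_iff.mp hpar; omega
    · obtain ⟨a', b', _, hw, _⟩ := halt.2 (Nat.odd_iff.mp hpar)
      rw [hx] at hw; exact absurd hw (by simp)
  · rcases Nat.even_or_odd (k-1) with hpar | hpar
    · have := Nat.even_iff.mp hpar; omega
    · obtain ⟨a', b', _, hw, _⟩ := halt.2 (Nat.odd_iff.mp hpar)
      rw [hx] at hw; exact absurd hw (by simp)
  · exact absurd hx (hmid (k-1) (by omega))

end Even

section Even2

variable {E : V → V → Prop} {s t tp : V}

theorem closed_at_t_even (hnp : ¬ HasPath E s t) (hst : s ≠ t) (hstp : s ≠ tp) (http : t ≠ tp)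
    (ht : ∀ u, ¬ E t u) :
    ∀ n : ℕ, IsPathOfLength (SubdivAdded E s t tp) (Sum.inl t) (Sum.inl t) n → 2 ∣ n := by
  intro n
  induction n using Nat.strong_induction_on with
  | _ n ih =>
    intro ⟨f, hf0, hfn, hfe⟩
    rcases Nat.eq_zero_or_pos n with rfl | hn
    · exact ⟨0, rfl⟩
    · have hf1 : f 1 = Sum.inl s := out_t hst http ht (hf0 ▸ hfe 0 hn)
      have hex : ∃ j, 1 ≤ j ∧ j ≤ n ∧ f j = Sum.inl t := ⟨n, hn, le_refl n, hfn⟩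
      classical
      let m := Nat.find hex
      obtain ⟨hm1, hmn, hfm⟩ : 1 ≤ m ∧ m ≤ n ∧ f m = Sum.inl t := Nat.find_spec hex
      have hmin : ∀ j < m, ¬ (1 ≤ j ∧ j ≤ n ∧ f j = Sum.inl t) := fun j hj => Nat.find_min hex hj
      have hm2 : 2 ≤ m := by
        by_contra h
        have hmeq : m = 1 := by omega
        rw [hmeq, hf1] at hfm
        exact hst (by injection hfm)
      -- segment from index 1 to m
      have hseg : 2 ∣ (m - 1 + 1) := by
        refine seg_even hnp hstp http (g := fun i => f (1 + i)) (k := m - 1) (by omega)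
          (show f (1 + 0) = Sum.inl s by simpa using hf1) ?_ ?_ ?_
        · show f (1 + (m-1)) = Sum.inl t
          have : 1 + (m - 1) = m := by omega
          rw [this]; exact hfm
        · intro j hj
          show f (1 + j) ≠ Sum.inl t
          intro hcon
          exact hmin (1+j) (by omega) ⟨by omega, by omega, hcon⟩
        · intro i hi
          have := hfe (1+i) (by omega)
          show SubdivAdded E s t tp (f (1+i)) (f (1+i+1))
          exact this
      have hm_even : 2 ∣ m := by omega
      -- tail
      have htail : 2 ∣ (n - m) := by
        refine ih (n - m) (by omega) ⟨fun i => f (m + i), hfm, ?_, ?_⟩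
        · show f (m + (n - m)) = Sum.inl t
          rw [Nat.add_sub_cancel' hmn]; exact hfn
        · intro i hi
          have := hfe (m+i) (by omega)
          show SubdivAdded E s t tp (f (m+i)) (f (m+i+1))
          convert this using 2
      omega

end Even2

section Constr

variable {E : V → V → Prop} {s t tp : V}

theorem edge_st : SubdivAdded E s t tp (Sum.inl s) (Sum.inl t) :=
  Or.inr (Or.inr (Or.inl ⟨rfl, rfl⟩))

theorem edge_ts : SubdivAdded E s t tp (Sum.inl t) (Sum.inl s) :=
  Or.inr (Or.inr (Or.inr (Or.inr ⟨rfl, rfl⟩)))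

theorem two_cycle : IsPathOfLength (SubdivAdded E s t tp) (Sum.inl s) (Sum.inl s) 2 :=
  path_concat (path_single edge_st) (path_single edge_ts)

theorem scc_st : SameSCC (SubdivAdded E s t tp) (Sum.inl s) (Sum.inl t) :=
  ⟨⟨1, path_single edge_st⟩, ⟨1, path_single edge_ts⟩⟩

theorem two_mem : 2 ∈ cycleLengths (SubdivAdded E s t tp) :=
  ⟨by omega, Sum.inl s, two_cycle⟩

theorem subdiv_path {u v : V} {n : ℕ} (h : IsPathOfLength E u v n) :
    IsPathOfLength (SubdivAdded E s t tp) (Sum.inl u) (Sum.inl v) (2*n) := by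
  obtain ⟨f, hf0, hfn, hfe⟩ := h
  refine ⟨fun j => if j % 2 = 0 then Sum.inl (f (j/2)) else Sum.inr (f (j/2), f (j/2+1)),
    by simp [hf0], ?_, ?_⟩
  · have h1 : (2*n) % 2 = 0 := by omega
    have h2 : (2*n) / 2 = n := by omega
    simp [h1, h2, hfn]
  · intro j hj
    rcases Nat.even_or_odd j with hpar | hpar
    · have h0 : j % 2 = 0 := Nat.even_iff.mp hpar
      have h1 : (j+1) % 2 = 1 := by omega
      have h2 : (j+1)/2 = j/2 := by omega
      simp only [h0, h1, h2, if_true, if_false, Nat.one_ne_zero]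
      exact Or.inl ⟨f (j/2), f (j/2+1), hfe (j/2) (by omega), rfl, rfl⟩
    · have h0 : j % 2 = 1 := Nat.odd_iff.mp hpar
      have h1 : (j+1) % 2 = 0 := by omega
      have h2 : (j+1)/2 = j/2 + 1 := by omega
      simp only [h0, h1, h2, if_true, if_false, Nat.one_ne_zero]
      exact Or.inr (Or.inl ⟨f (j/2), f (j/2+1), hfe (j/2) (by omega), rfl, rfl⟩)

theorem odd_cycle (h : HasPath E s t) :
    ∃ n, IsPathOfLength (SubdivAdded E s t tp) (Sum.inl s) (Sum.inl s) (2*n+1) := by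
  obtain ⟨n, hp⟩ := h
  exact ⟨n, path_concat (subdiv_path hp) (path_single edge_ts)⟩

theorem cyc_scc (hac : Acyclic E) (http : t ≠ tp) {v : V ⊕ V × V} {n : ℕ} (hn : 0 < n)
    (h : IsPathOfLength (SubdivAdded E s t tp) v v n) :
    SameSCC (SubdivAdded E s t tp) v (Sum.inl t) := by
  obtain ⟨f, hf0, hfn, hfe⟩ := h
  obtain ⟨m, hmn, hfm⟩ := pass_through_t (s := s) hac http hn (hfn.trans hf0.symm) hfe
  exact ⟨⟨m, hf0 ▸ hfm ▸ path_prefix hfe hmn⟩, ⟨n - m, hfm ▸ hfn ▸ path_suffix hfe hmn⟩⟩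

theorem comp_eq (hac : Acyclic E) (http : t ≠ tp) {c : V ⊕ V × V}
    (hne : (compCycleLengths (SubdivAdded E s t tp) c).Nonempty) :
    compCycleLengths (SubdivAdded E s t tp) c = cycleLengths (SubdivAdded E s t tp) := by
  obtain ⟨n0, hn0, v0, hscc0, hcyc0⟩ := hne
  have htc : SameSCC (SubdivAdded E s t tp) (Sum.inl t) c := by
    have h1 := cyc_scc hac http hn0 hcyc0
    exact ⟨hasPath_trans h1.2 hscc0.1, hasPath_trans hscc0.2 h1.1⟩
  ext n
  constructor
  · rintro ⟨hn, v, _, hcyc⟩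
    exact ⟨hn, v, hcyc⟩
  · rintro ⟨hn, v, hcyc⟩
    have h1 := cyc_scc hac http hn hcyc
    exact ⟨hn, v, ⟨hasPath_trans h1.1 htc.1, hasPath_trans htc.2 h1.2⟩, hcyc⟩

end Constr
/-- Under the same hypotheses, `G'` contains a cycle, and its period is
`1` if `G` has an `(s,t)`-path and `2` otherwise. -/
theorem period_one_iff_st_path (E : V → V → Prop) (s t tp : V)
    (hac : Acyclic E) (hst : s ≠ t) (hstp : s ≠ tp) (http : t ≠ tp)
    (hs : ∀ u, ¬ E u s) (ht : ∀ u, ¬ E t u) (htp : ∀ u, ¬ E tp u) :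
    (cycleLengths (SubdivAdded E s t tp)).Nonempty ∧
    ∀ P : ℕ, IsDigraphPeriod (SubdivAdded E s t tp) P →
      (HasPath E s t → P = 1) ∧ (¬ HasPath E s t → P = 2) := by
  constructor
  · exact ⟨2, two_mem⟩
  · intro P hP
    obtain ⟨h1, h2⟩ := hP
    constructor
    · intro hpath
      obtain ⟨n, hodd⟩ := odd_cycle (tp := tp) hpath
      have hOddMem : (2*n+1) ∈ cycleLengths (SubdivAdded E s t tp) :=
        ⟨by omega, Sum.inl s, hodd⟩
      have hP1 : P ∣ 1 := by
        apply h2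
        intro c p hne hgcd
        rw [comp_eq hac http hne] at hgcd
        have hp2 := hgcd.1 2 two_mem
        have hpo := hgcd.1 _ hOddMem
        have hp2n : p ∣ 2*n := dvd_trans hp2 (dvd_mul_right 2 n)
        have := Nat.dvd_sub hpo hp2n
        simpa using this
      exact Nat.dvd_one.mp hP1
    · intro hnp
      have hall : ∀ n ∈ cycleLengths (SubdivAdded E s t tp), 2 ∣ n := by
        rintro n ⟨hn, v, f, hf0, hfn, hfe⟩
        obtain ⟨m, hmn, hfm⟩ := pass_through_t (s := s) hac http hn (hfn.trans hf0.symm) hfe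
        have hsuf := path_suffix hfe hmn
        have hpre := path_prefix hfe hmn
        rw [hfm] at hsuf hpre
        rw [hfn] at hsuf
        rw [hf0] at hpre
        have hclosed := path_concat hsuf hpre
        have := closed_at_t_even hnp hst hstp http ht _ hclosed
        omega
      have h2mem : 2 ∈ compCycleLengths (SubdivAdded E s t tp) (Sum.inl t) :=
        ⟨by omega, Sum.inl s, scc_st, two_cycle⟩
      have hne : (compCycleLengths (SubdivAdded E s t tp) (Sum.inl t)).Nonempty := ⟨2, h2mem⟩
      have hgcd2 : IsSetGcd (compCycleLengths (SubdivAdded E s t tp) (Sum.inl t)) 2 := by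
        rw [comp_eq hac http hne]
        exact ⟨hall, fun q hq => hq 2 two_mem⟩
      have h2P : 2 ∣ P := h1 _ 2 hne hgcd2
      have hP2 : P ∣ 2 := by
        apply h2
        intro c p hcne hgcd
        rw [comp_eq hac http hcne] at hgcd
        exact hgcd.1 2 two_mem
      exact Nat.dvd_antisymm hP2 h2P
end

section
/- Let G = (V, E) be an acyclic digraph with distinct vertices s, t, t' such that t and t' are exactly the vertices of G having no outgoing edges, let n = |V|, and let G' be the digraph with vertex set V ∪ U, where U = {u_1, …, u_n} are n fresh vertices, and whose edges are: all edges of E; an edge (x, s) for every vertex x of G'; an edge (t, x) for every vertex x of G'; and the edges (t', u_1), (u_1, u_2), …, (u_{n−1}, u_n), (u_n, t). If G contains an (s,t)-path, then for every ordered pair (x, y) of vertices of G' there is an (x,y)-path in G' of length exactly n. -/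
variable {V : Type*}

/-- The edge relation of the digraph `G'` on `V ⊕ Fin n` (where `Sum.inr i` is the
fresh vertex `u_{i+1}`): all edges of `E`; an edge from every vertex to `s`; an edge
from `t` to every vertex; and the path `t' → u_1 → ⋯ → u_n → t`. -/
def ExtAdj (E : V → V → Prop) (s t tp : V) (n : ℕ) :
    (V ⊕ Fin n) → (V ⊕ Fin n) → Prop := fun x y =>
  (∃ a b, E a b ∧ x = Sum.inl a ∧ y = Sum.inl b) ∨
  (y = Sum.inl s) ∨
  (x = Sum.inl t) ∨
  (∃ i j : Fin n, x = Sum.inr i ∧ y = Sum.inr j ∧ (j : ℕ) = (i : ℕ) + 1) ∨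
  (x = Sum.inl tp ∧ ∃ i : Fin n, y = Sum.inr i ∧ (i : ℕ) = 0) ∨
  (∃ i : Fin n, x = Sum.inr i ∧ (i : ℕ) = n - 1 ∧ y = Sum.inl t)

/-- If `G` is acyclic, `t` and `t'` are exactly its vertices without
outgoing edges, `n = |V|`, and `G` has an `(s,t)`-path, then in `G'` there is a path
of length exactly `n` between every ordered pair of vertices. -/
theorem path_of_length_n_between_all_pairs [Fintype V] (E : V → V → Prop)
    (s t tp : V) (n : ℕ) (hn : n = Fintype.card V) (hac : Acyclic E)
    (hst : s ≠ t) (hstp : s ≠ tp) (http : t ≠ tp)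
    (hout : ∀ x : V, (∀ y, ¬ E x y) ↔ (x = t ∨ x = tp))
    (hpath : HasPath E s t) :
    ∀ x y : V ⊕ Fin n, IsPathOfLength (ExtAdj E s t tp n) x y n := by
  obtain ⟨L, g, hg0, hgL, hge⟩ := hpath
  -- vertices of the path are distinct
  have hginj : ∀ i j, i < j → j ≤ L → g i ≠ g j := by
    intro i j hij hjL heq
    refine hac (g i) (j - i) (by omega) ⟨fun m => g (i + m), by simp, ?_, ?_⟩
    · show g (i + (j - i)) = g i
      rw [show i + (j - i) = j by omega, ← heq]
    · intro m hm
      have := hge (i + m) (by omega)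
      rwa [show i + m + 1 = i + (m + 1) by omega] at this
  -- tp is not on the path
  have htp : ∀ m ≤ L, g m ≠ tp := by
    intro m hm heq
    rcases Nat.lt_or_ge m L with h | h
    · exact ((hout tp).mpr (Or.inr rfl)) (g (m + 1)) (heq ▸ hge m h)
    · have hmL : m = L := by omega
      exact http (by rw [← hgL, ← hmL, heq])
  have hL1 : 1 ≤ L := by
    rcases Nat.eq_zero_or_pos L with h | h
    · subst h; exact absurd (hg0.symm.trans hgL) hst
    · exact h
  -- L + 2 ≤ n since the path avoids tp and has distinct vertices
  have hLn : L + 2 ≤ n := by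
    rw [hn]
    have hinj : Function.Injective (fun i : Fin (L + 2) => if (i : ℕ) ≤ L then g i else tp) := by
      intro a b hab
      have ha2 := a.isLt; have hb2 := b.isLt
      by_cases ha : (a : ℕ) ≤ L <;> by_cases hb : (b : ℕ) ≤ L <;>
        simp only [ha, hb, if_pos, if_neg, if_true, if_false] at hab
      · rcases lt_trichotomy (a : ℕ) (b : ℕ) with h | h | h
        · exact absurd hab (hginj a b h hb)
        · exact Fin.ext h
        · exact absurd hab.symm (hginj b a h ha)
      · exact absurd hab (htp a ha)
      · exact absurd hab.symm (htp b hb)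
      · exact Fin.ext (by omega)
    calc L + 2 = Fintype.card (Fin (L + 2)) := by simp
      _ ≤ Fintype.card V := Fintype.card_le_of_injective _ hinj
  intro x y
  set d := n - 1 - L with hd
  refine ⟨fun i => if i = 0 then x else if i ≤ d then Sum.inl s
      else if i ≤ n - 1 then Sum.inl (g (i - d)) else y, by simp, ?_, ?_⟩
  · have h1 : ¬ (n = 0) := by omega
    have h2 : ¬ (n ≤ d) := by omega
    have h3 : ¬ (n ≤ n - 1) := by omega
    simp only [h1, h2, h3, if_false]
  · intro i hi
    rcases Nat.lt_or_ge i d with hcase | hcase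
    · -- next vertex is s
      have h1 : ¬ (i + 1 = 0) := by omega
      have h2 : i + 1 ≤ d := by omega
      simp only [h1, h2, if_false, if_true, if_pos]
      exact Or.inr (Or.inl rfl)
    · rcases Nat.lt_or_ge i (n - 1) with hcase2 | hcase2
      · -- interior of the s→t path
        have hFi : (if i = 0 then x else if i ≤ d then Sum.inl s
            else if i ≤ n - 1 then Sum.inl (g (i - d)) else y) = Sum.inl (g (i - d)) := by
          rcases Nat.eq_or_lt_of_le hcase with h | h
          · have h0 : ¬ (i = 0) := by omega
            have h2 : i ≤ d := by omega
            simp only [h0, h2, if_false, if_true, if_pos]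
            rw [show i - d = 0 by omega, hg0]
          · have h0 : ¬ (i = 0) := by omega
            have h2 : ¬ (i ≤ d) := by omega
            have h3 : i ≤ n - 1 := by omega
            simp only [h0, h2, h3, if_false, if_true, if_pos]
        have hFi1 : (if i + 1 = 0 then x else if i + 1 ≤ d then Sum.inl s
            else if i + 1 ≤ n - 1 then Sum.inl (g (i + 1 - d)) else y)
            = Sum.inl (g (i - d + 1)) := by
          have h0 : ¬ (i + 1 = 0) := by omega
          have h2 : ¬ (i + 1 ≤ d) := by omega
          have h3 : i + 1 ≤ n - 1 := by omega
          simp only [h0, h2, h3, if_false, if_true, if_pos]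
          rw [show i + 1 - d = i - d + 1 by omega]
        beta_reduce
        rw [hFi, hFi1]
        exact Or.inl ⟨g (i - d), g (i - d + 1), hge (i - d) (by omega), rfl, rfl⟩
      · -- last step: from t
        have hieq : i = n - 1 := by omega
        have h0 : ¬ (i = 0) := by omega
        have h2 : ¬ (i ≤ d) := by omega
        have h3 : i ≤ n - 1 := by omega
        simp only [h0, h2, h3, if_false, if_true, if_pos]
        have : g (i - d) = t := by rw [show i - d = L by omega, hgL]
        rw [this]
        exact Or.inr (Or.inr (Or.inl rfl))
end

section
/- Let G = (V, E) be a digraph with n = |V| vertices, let p ≥ 1 be an integer, and let s, t, c be vertices of G. If there is an (s,t)-path in G of length ℓ passing through c, then there is an (s,t)-path in G passing through c whose length ℓ′ satisfies ℓ′ ≡ ℓ (mod p) and ℓ′ ≤ 2·n·p. -/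
variable {V : Type*}

/-- Cut out a repeated (vertex, residue) pair from a path. -/
lemma shorten_step [Fintype V] (E : V → V → Prop) (p : ℕ) (hp : 1 ≤ p) (u v : V)
    (a : ℕ) (ha : Fintype.card V * p ≤ a) (h : IsPathOfLength E u v a) :
    ∃ a' < a, IsPathOfLength E u v a' ∧ a' ≡ a [MOD p] := by
  obtain ⟨f, hf0, hfa, hfe⟩ := h
  set N := Fintype.card V * p with hN
  have hcard : Fintype.card (V × Fin p) < Fintype.card (Fin (N + 1)) := by
    simp [Fintype.card_prod, hN]
  obtain ⟨i0, j0, hne, heq⟩ := Fintype.exists_ne_map_eq_of_card_lt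
    (fun k : Fin (N + 1) => (f k, (⟨(k : ℕ) % p, Nat.mod_lt _ hp⟩ : Fin p))) hcard
  -- extract i < j with f i = f j, i % p = j % p, j ≤ N
  obtain ⟨i, j, hij, hfij, hmod, hjN⟩ :
      ∃ i j : ℕ, i < j ∧ f i = f j ∧ i % p = j % p ∧ j ≤ N := by
    simp only [Prod.mk.injEq, Fin.mk.injEq] at heq
    rcases lt_or_gt_of_ne (fun hc => hne (by exact_mod_cast Fin.ext (by exact_mod_cast congrArg Fin.val hc))) with h1 | h1
    · exact ⟨i0, j0, by exact_mod_cast h1, heq.1, heq.2, Nat.lt_succ_iff.mp j0.isLt⟩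
    · exact ⟨j0, i0, by exact_mod_cast h1, heq.1.symm, heq.2.symm, Nat.lt_succ_iff.mp i0.isLt⟩
  set d := j - i with hd
  have hdpos : 0 < d := by omega
  have hpd : p ∣ d := (Nat.modEq_iff_dvd' hij.le).mp hmod
  have hja : j ≤ a := hjN.trans ha
  refine ⟨a - d, by omega, ⟨fun k => if k < i then f k else f (k + d), ?_, ?_, ?_⟩, ?_⟩
  · by_cases h0 : 0 < i
    · simpa [h0] using hf0
    · have hi0 : i = 0 := by omega
      have : f (0 + d) = f 0 := by
        rw [zero_add]
        have : d = j := by omega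
        rw [this, ← hfij, hi0]
      simp only [h0, if_false]
      rw [this, hf0]
  · have h1 : ¬ (a - d < i) := by omega
    have h2 : a - d + d = a := by omega
    simp only [h1, if_false, h2, hfa]
  · intro k hk
    have hka : k + d < a := by omega
    by_cases h1 : k + 1 < i
    · have h2 : k < i := by omega
      simp only [h1, h2, if_true]
      exact hfe k (by omega)
    · by_cases h2 : k < i
      · have h3 : k + 1 = i := by omega
        simp only [h1, h2, if_true, if_false]
        have : f (k + 1 + d) = f (k + 1) := by
          have : k + 1 + d = j := by omega
          rw [this, ← hfij, h3]
        rw [this]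
        exact hfe k (by omega)
      · simp only [h1, h2, if_false]
        rw [show k + 1 + d = (k + d) + 1 by omega]
        exact hfe (k + d) hka
  · have heq' : (a - d) + d = a := by omega
    have : a - d ≡ (a - d) + d [MOD p] :=
      (Nat.modEq_iff_dvd' (Nat.le_add_right _ _)).mpr (by simpa using hpd)
    simpa [heq'] using this

/-- Shorten a path to length `< card V * p` keeping residue mod `p`. -/
lemma shorten [Fintype V] (E : V → V → Prop) (p : ℕ) (hp : 1 ≤ p) (u v : V) :
    ∀ a, IsPathOfLength E u v a →
      ∃ a', IsPathOfLength E u v a' ∧ a' ≡ a [MOD p] ∧ a' < Fintype.card V * p := by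
  intro a
  induction a using Nat.strong_induction_on with
  | _ a ih =>
    intro h
    have hVpos : 0 < Fintype.card V := Fintype.card_pos_iff.mpr ⟨u⟩
    by_cases hlt : a < Fintype.card V * p
    · exact ⟨a, h, Nat.ModEq.refl a, hlt⟩
    · obtain ⟨a', ha', hpath, hmod⟩ := shorten_step E p hp u v a (by omega) h
      obtain ⟨a'', hpath'', hmod'', hlt''⟩ := ih a' ha' hpath
      exact ⟨a'', hpath'', hmod''.trans hmod, hlt''⟩

/-- If there is an `(s,t)`-path of length `ℓ` through `c` in a digraph
with `n` vertices, then for every `p ≥ 1` there is an `(s,t)`-path through `c` of length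
`ℓ' ≡ ℓ (mod p)` with `ℓ' ≤ 2·n·p`. -/
theorem short_path_through_vertex_mod_p [Fintype V] (E : V → V → Prop)
    (n : ℕ) (hn : n = Fintype.card V) (p : ℕ) (hp : 1 ≤ p)
    (s t c : V) (l : ℕ) (h : IsPathThruOfLength E s t c l) :
    ∃ l' : ℕ, IsPathThruOfLength E s t c l' ∧ l' ≡ l [MOD p] ∧ l' ≤ 2 * n * p := by
  obtain ⟨f, hf0, hfl, hfe, m, hml, hfm⟩ := h
  -- split into two legs
  have leg1 : IsPathOfLength E s c m := ⟨f, hf0, hfm, fun i hi => hfe i (by omega)⟩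
  have leg2 : IsPathOfLength E c t (l - m) := by
    refine ⟨fun k => f (m + k), by simpa using hfm, ?_, fun i hi => ?_⟩
    · show f (m + (l - m)) = t
      rw [show m + (l - m) = l by omega, hfl]
    · show E (f (m + i)) (f (m + (i + 1)))
      rw [show m + (i + 1) = (m + i) + 1 by omega]
      exact hfe (m + i) (by omega)
  obtain ⟨a, ⟨g1, hg10, hg1a, hg1e⟩, hamod, halt⟩ := shorten E p hp s c m leg1
  obtain ⟨b, ⟨g2, hg20, hg2b, hg2e⟩, hbmod, hblt⟩ := shorten E p hp c t (l - m) leg2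
  refine ⟨a + b, ⟨fun k => if k ≤ a then g1 k else g2 (k - a), ?_, ?_, ?_, a, by omega, ?_⟩,
    ?_, ?_⟩
  · simp [hg10]
  · by_cases hb : b = 0
    · have h1 : a + b ≤ a := by omega
      simp only [h1, if_true]
      rw [show a + b = a by omega, hg1a, ← hg20, ← hb, hg2b]
    · have h1 : ¬ (a + b ≤ a) := by omega
      simp only [h1, if_false]
      rw [show a + b - a = b by omega, hg2b]
  · intro k hk
    by_cases h1 : k + 1 ≤ a
    · simp only [h1, show k ≤ a by omega, if_true]
      exact hg1e k (by omega)
    · by_cases h2 : k ≤ a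
      · have hka : k = a := by omega
        simp only [h1, h2, if_true, if_false]
        rw [show k + 1 - a = 1 by omega, hka, hg1a, ← hg20]
        exact hg2e 0 (by omega)
      · simp only [h1, h2, if_false]
        rw [show k + 1 - a = (k - a) + 1 by omega]
        exact hg2e (k - a) (by omega)
  · simp [hg1a]
  · have : a + b ≡ m + (l - m) [MOD p] := hamod.add hbmod
    simpa [show m + (l - m) = l by omega] using this
  · have hVpos : 0 < Fintype.card V := Fintype.card_pos_iff.mpr ⟨s⟩
    rw [hn]
    have hm : 2 * Fintype.card V * p = 2 * (Fintype.card V * p) := by ring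
    omega
end
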